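/- arXiv:1909.08422 — 2 statements merged into one kernel-verified Lean document; each statement's English description precedes it below -/
import Mathlib

section
/- Let v̄_1,…,v̄_{d'} be linearly independent vectors in ℝ^d with 1 ≤ d' ≤ d − 1, and let v̄^{(1)},…,v̄^{(d)} ∈ ℝ^{d'} denote the columns of the d'×d matrix whose rows are v̄_1,…,v̄_{d'}. Then the following are equivalent: (i) there exist d − d' linearly independent (over ℝ) integer vectors k̄_1,…,k̄_{d−d'} ∈ ℤ^d each orthogonal to every v̄_1,…,v̄_{d'}; (ii) there exists a subset S = {i_1,…,i_{d−d'}} ⊂ {1,…,d} with complement {j_1,…,j_{d'}} such that the columns v̄^{(j_1)},…,v̄^{(j_{d'})} are linearly independent and the d'×(d−d') matrix (v̄^{(j_1)},…,v̄^{(j_{d'})})^{−1}(v̄^{(i_1)},…,v̄^{(i_{d−d'})}) has all rational entries. -/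
/-!
Split the columns of `V` by injections `f`, `g` with complementary ranges and write `N`, `C`
for the corresponding column blocks. If `N` is invertible, `V x = 0` says
`x ∘ f = -(N⁻¹C) (x ∘ g)`, so the kernel has a basis whose `g`-parts are standard basis vectors
and whose `f`-parts are the negated columns of `N⁻¹C`; when `N⁻¹C` is rational, clearing
denominators makes it integral.
Conversely, given an integer matrix `K` of full row rank with `V Kᵀ = 0`, choose `g` with
`K ∘ g` invertible. Then `V Kᵀ = 0` reads `N (K ∘ f)ᵀ + C (K ∘ g)ᵀ = 0`, so `C = N X` with the
rational matrix `X = -(K ∘ f)ᵀ ((K ∘ g)ᵀ)⁻¹`; hence `V = N [1 | X]` up to the order of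
columns, which forces `N` to be invertible, and `N⁻¹C = X`.
-/

open Matrix Set

theorem Function.bijective_sumElim_iff {ι κ n : Type*} [Fintype ι] [Fintype κ] [Fintype n]
    (h : Fintype.card ι + Fintype.card κ = Fintype.card n) {f : ι → n} {g : κ → n} :
    Function.Bijective (Sum.elim f g) ↔
      Function.Injective f ∧ Function.Injective g ∧ ∀ i j, f i ≠ g j := by
  rw [Fintype.bijective_iff_injective_and_card, Fintype.card_sum]
  exact ⟨fun ⟨hinj, _⟩ => ⟨hinj.comp Sum.inl_injective, hinj.comp Sum.inr_injective,
    fun i j hij => Sum.inl_ne_inr (hinj hij)⟩, fun ⟨hf, hg, hfg⟩ => ⟨hf.sumElim hg hfg, h⟩⟩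

theorem Function.Injective.exists_bijective_sumElim {ι κ n : Type*} [Fintype ι] [Fintype κ]
    [Fintype n] (h : Fintype.card ι + Fintype.card κ = Fintype.card n) {g : κ → n}
    (hg : Function.Injective g) : ∃ f : ι → n, Function.Bijective (Sum.elim f g) := by
  classical
  have hc : Fintype.card ι = Fintype.card ((Set.range g)ᶜ : Set n) := by
    rw [Fintype.card_compl_set, Set.card_range_of_injective hg]
    omega
  let e := Fintype.equivOfCardEq hc
  exact ⟨fun i => e i, (Function.bijective_sumElim_iff h).mpr
    ⟨Subtype.val_injective.comp e.injective, hg, fun i j hij => (e i).2 ⟨j, hij.symm⟩⟩⟩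

namespace Matrix

variable {l m n p ι κ : Type*}

theorem mul_eq_add_of_bijective_sumElim {R : Type*} [NonUnitalNonAssocSemiring R] [Fintype n]
    [Fintype ι] [Fintype κ] {f : ι → n} {g : κ → n} (hfg : Function.Bijective (Sum.elim f g))
    (A : Matrix l n R) (B : Matrix n p R) :
    A * B = A.submatrix id f * B.submatrix f id + A.submatrix id g * B.submatrix g id := by
  ext i k
  simp only [mul_apply, add_apply, submatrix_apply, id_eq]
  rw [← (Equiv.ofBijective _ hfg).sum_comp, Fintype.sum_sum_type]
  rfl

theorem mul_transpose_eq_zero_iff {R : Type*} [NonUnitalCommSemiring R] [Fintype n]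
    (A : Matrix l n R) (B : Matrix p n R) :
    A * Bᵀ = 0 ↔ ∀ j i, ∑ k, B j k * A i k = 0 := by
  simp only [← ext_iff, mul_apply, transpose_apply, zero_apply, mul_comm (B _ _)]
  exact forall_comm

theorem map_nonsing_inv {K L : Type*} [Fintype m] [DecidableEq m] [Field K] [Field L]
    (φ : K →+* L) (A : Matrix m m K) : A⁻¹.map φ = (A.map φ)⁻¹ := by
  have hdet : (A.map φ).det = φ A.det := (φ.map_det A).symm
  have hadj : (A.map φ).adjugate = A.adjugate.map φ := (φ.map_adjugate A).symm
  ext i j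
  simp [inv_def, hdet, hadj, Ring.inverse_eq_inv']

theorem exists_ne_zero_map_intCast_eq_smul [Finite m] [Finite n] (A : Matrix m n ℚ) :
    ∃ D : ℤ, D ≠ 0 ∧ ∃ B : Matrix m n ℤ, B.map (Int.cast) = D • A := by
  obtain ⟨⟨D, hD⟩, hA⟩ := IsLocalization.exist_integer_multiples_of_finite (nonZeroDivisors ℤ)
    fun p : m × n => A p.1 p.2
  choose B hB using hA
  refine ⟨D, nonZeroDivisors.ne_zero hD, of fun i j => B (i, j), ?_⟩
  ext i j
  simpa using hB (i, j)

variable {K : Type*} [Field K]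

theorem linearIndependent_row_of_mul [Fintype m] {A : Matrix l m K} {B : Matrix m n K}
    (h : LinearIndependent K (A * B).row) : LinearIndependent K A.row :=
  h.of_comp B.vecMulLinear

theorem linearIndependent_row_of_isUnit_submatrix [Fintype κ] [DecidableEq κ] {A : Matrix κ n K}
    {g : κ → n} (h : IsUnit (A.submatrix id g)) : LinearIndependent K A.row :=
  (linearIndependent_rows_iff_isUnit.mpr h).of_comp (LinearMap.funLeft K K g)

theorem exists_injective_isUnit_submatrix [Fintype m] [DecidableEq m] [Fintype n]
    (A : Matrix m n K) (hA : LinearIndependent K A.row) :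
    ∃ g : m → n, Function.Injective g ∧ IsUnit (A.submatrix id g) := by
  obtain ⟨κ, a, ha, hspan, hli⟩ := exists_linearIndependent' K A.col
  have : Fintype κ := Fintype.ofInjective a ha
  have hcard : Fintype.card m = Fintype.card κ := by
    rw [← hA.rank_matrix, rank_eq_finrank_span_cols, ← hspan, finrank_span_eq_card hli]
  let e := Fintype.equivOfCardEq hcard
  exact ⟨a ∘ e, ha.comp e.injective,
    linearIndependent_cols_iff_isUnit.mp (hli.comp e e.injective)⟩

end Matrix

section KernelSplitting

variable {m κ n : Type*} [Fintype m] [DecidableEq m] [Fintype κ] [DecidableEq κ] [Fintype n]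
  (V : Matrix m n ℝ)

theorem exists_rational_split_of_int_kernel (hV : LinearIndependent ℝ V.row)
    (K : Matrix κ n ℤ) (hK : LinearIndependent ℝ (K.map (Int.cast : ℤ → ℝ)).row)
    (hVK : V * (K.map (Int.cast : ℤ → ℝ))ᵀ = 0)
    (hcard : Fintype.card m + Fintype.card κ = Fintype.card n) :
    ∃ (f : m → n) (g : κ → n), Function.Bijective (Sum.elim f g) ∧
      IsUnit (V.submatrix id f) ∧
      ∃ M : Matrix m κ ℚ, (V.submatrix id f)⁻¹ * V.submatrix id g = M.map (Rat.cast) := by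
  classical
  set Kq := K.map (Int.cast : ℤ → ℚ)
  have hKq : K.map (Int.cast : ℤ → ℝ) = Kq.map (Rat.castHom ℝ) := by
    simp [Kq, Matrix.map_map, Function.comp_def]
  rw [hKq] at hK hVK
  obtain ⟨g, hg, hA⟩ := exists_injective_isUnit_submatrix _ hK
  obtain ⟨f, hfg⟩ := hg.exists_bijective_sumElim hcard
  set N := V.submatrix id f
  set C := V.submatrix id g
  set Af := ((Kq.map (Rat.castHom ℝ)).submatrix id f)ᵀ
  set Ag := ((Kq.map (Rat.castHom ℝ)).submatrix id g)ᵀ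
  set M := -(Kq.submatrix id f)ᵀ * ((Kq.submatrix id g)ᵀ)⁻¹
  have hsum : N * Af + C * Ag = 0 := by
    rw [← hVK, mul_eq_add_of_bijective_sumElim hfg, ← transpose_submatrix, ← transpose_submatrix]
  have hM : M.map (Rat.castHom ℝ) = -Af * Ag⁻¹ := by
    rw [Matrix.map_mul, Matrix.map_neg _ (map_neg _), map_nonsing_inv, transpose_map,
      transpose_map, ← submatrix_map, ← submatrix_map]
  have hC : C = N * M.map (Rat.castHom ℝ) := by
    rw [hM, Matrix.neg_mul, Matrix.mul_neg, ← Matrix.mul_assoc, ← Matrix.neg_mul,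
      ← eq_neg_of_add_eq_zero_right hsum,
      mul_nonsing_inv_cancel_right _ _
        ((isUnit_iff_isUnit_det _).mp ((isUnit_transpose _).mpr hA))]
  have hN : IsUnit N := by
    have hV1 := mul_eq_add_of_bijective_sumElim hfg V (1 : Matrix n n ℝ)
    change V * 1 = N * _ + C * _ at hV1
    rw [Matrix.mul_one, hC, Matrix.mul_assoc, ← Matrix.mul_add] at hV1
    rw [hV1] at hV
    exact linearIndependent_rows_iff_isUnit.mp (linearIndependent_row_of_mul hV)
  refine ⟨f, g, hfg, hN, M, ?_⟩
  change N⁻¹ * C = M.map (Rat.castHom ℝ)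
  rw [hC, nonsing_inv_mul_cancel_left _ _ ((isUnit_iff_isUnit_det _).mp hN)]

theorem exists_int_kernel_of_rational_split {f : m → n} {g : κ → n}
    (hfg : Function.Bijective (Sum.elim f g)) (hN : IsUnit (V.submatrix id f)) (M : Matrix m κ ℚ)
    (hM : (V.submatrix id f)⁻¹ * V.submatrix id g = M.map (Rat.cast)) :
    ∃ K : Matrix κ n ℤ, LinearIndependent ℝ (K.map (Int.cast : ℤ → ℝ)).row ∧
      V * (K.map (Int.cast : ℤ → ℝ))ᵀ = 0 := by
  obtain ⟨D, hD, Mz, hMz⟩ := M.exists_ne_zero_map_intCast_eq_smul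
  let σ := Equiv.ofBijective _ hfg
  set Mr := M.map (Rat.cast : ℚ → ℝ)
  have hσf (i : m) : σ.symm (f i) = Sum.inl i := σ.symm_apply_apply (Sum.inl i)
  have hσg (j : κ) : σ.symm (g j) = Sum.inr j := σ.symm_apply_apply (Sum.inr j)
  -- up to the order of columns `K = D • [-Mᵀ | 1]`, the kernel basis read off from `M`
  set K := (fromCols (-Mzᵀ) (D • (1 : Matrix κ κ ℤ))).submatrix id σ.symm
  have hMzr : Mz.map (Int.cast : ℤ → ℝ) = (D : ℝ) • Mr := by
    ext i j
    have := congrFun (congrFun hMz i) j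
    simp only [map_apply, Matrix.smul_apply, zsmul_eq_mul] at this
    simp only [map_apply, Matrix.smul_apply, smul_eq_mul, Mr]
    exact_mod_cast this
  have hKf : ((K.map (Int.cast : ℤ → ℝ)).submatrix id f)ᵀ = -((D : ℝ) • Mr) := by
    rw [← hMzr]
    ext i j
    simp [K, hσf]
  have hKg : (K.map (Int.cast : ℤ → ℝ)).submatrix id g = (D : ℝ) • 1 := by
    ext i j
    simp only [K, submatrix_apply, map_apply, id, hσg, fromCols_apply_inr, Matrix.smul_apply,
      one_apply]
    split_ifs <;> simp
  have hC : V.submatrix id g = V.submatrix id f * Mr := by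
    rw [← hM, mul_nonsing_inv_cancel_left _ _ ((isUnit_iff_isUnit_det _).mp hN)]
  refine ⟨K, linearIndependent_row_of_isUnit_submatrix (g := g) ?_, ?_⟩
  · rw [hKg]
    simp [isUnit_iff_isUnit_det, hD]
  · rw [mul_eq_add_of_bijective_sumElim hfg, ← transpose_submatrix, ← transpose_submatrix,
      hKf, hKg, hC]
    simp

end KernelSplitting

theorem stmt7_general (d d' : ℕ) (hd2 : d' ≤ d - 1)
    (V : Matrix (Fin d') (Fin d) ℝ)
    (hV : LinearIndependent ℝ (fun i : Fin d' => V i)) :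
    (∃ k : Fin (d - d') → (Fin d → ℤ),
        LinearIndependent ℝ (fun j : Fin (d - d') => fun l : Fin d => ((k j l : ℝ))) ∧
        ∀ j : Fin (d - d'), ∀ i : Fin d', ∑ l : Fin d, (k j l : ℝ) * V i l = 0) ↔
    (∃ (g : Fin (d - d') → Fin d) (f : Fin d' → Fin d),
        Function.Injective g ∧ Function.Injective f ∧ (∀ i j, f i ≠ g j) ∧
        LinearIndependent ℝ (fun j : Fin d' => fun i : Fin d' => V i (f j)) ∧
        ∀ i : Fin d', ∀ j : Fin (d - d'), ∃ q : ℚ,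
          ((V.submatrix id f)⁻¹ * V.submatrix id g) i j = (q : ℝ)) := by
  have hcard : Fintype.card (Fin d') + Fintype.card (Fin (d - d')) = Fintype.card (Fin d) := by
    simp only [Fintype.card_fin]
    omega
  constructor
  · rintro ⟨k, hk, hkV⟩
    obtain ⟨f, g, hfg, hN, M, hM⟩ := exists_rational_split_of_int_kernel V hV (of k) hk
      ((mul_transpose_eq_zero_iff _ _).mpr hkV) hcard
    obtain ⟨hf, hg, hdisj⟩ := (Function.bijective_sumElim_iff hcard).mp hfg
    exact ⟨g, f, hg, hf, hdisj, linearIndependent_cols_iff_isUnit.mpr hN,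
      fun i j => ⟨M i j, by rw [hM]; rfl⟩⟩
  · rintro ⟨g, f, hg, hf, hdisj, hN, hq⟩
    choose q hq using hq
    obtain ⟨K, hK, hVK⟩ := exists_int_kernel_of_rational_split V
      ((Function.bijective_sumElim_iff hcard).mpr ⟨hf, hg, hdisj⟩)
      (linearIndependent_cols_iff_isUnit.mp hN) (of q) (ext hq)
    exact ⟨K, hK, (mul_transpose_eq_zero_iff _ _).mp hVK⟩

/-- **Lemma 4.2.** For linearly independent rows `v̄_1,…,v̄_{d'}` of a
`d'×d` real matrix `V`, there exist `d − d'` linearly independent integer vectors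
orthogonal to all the rows iff there is a splitting of the columns into a set of `d'`
linearly independent columns `B` and the remaining `d − d'` columns `C` such that
`B⁻¹C` is a rational matrix. -/
theorem stmt7 (d d' : ℕ) (hd1 : 1 ≤ d') (hd2 : d' ≤ d - 1)
    (V : Matrix (Fin d') (Fin d) ℝ)
    (hV : LinearIndependent ℝ (fun i : Fin d' => V i)) :
    (∃ k : Fin (d - d') → (Fin d → ℤ),
        LinearIndependent ℝ (fun j : Fin (d - d') => fun l : Fin d => ((k j l : ℝ))) ∧
        ∀ j : Fin (d - d'), ∀ i : Fin d', ∑ l : Fin d, (k j l : ℝ) * V i l = 0) ↔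
    (∃ (g : Fin (d - d') → Fin d) (f : Fin d' → Fin d),
        Function.Injective g ∧ Function.Injective f ∧ (∀ i j, f i ≠ g j) ∧
        LinearIndependent ℝ (fun j : Fin d' => fun i : Fin d' => V i (f j)) ∧
        ∀ i : Fin d', ∀ j : Fin (d - d'), ∃ q : ℚ,
          ((V.submatrix id f)⁻¹ * V.submatrix id g) i j = (q : ℝ)) :=
  stmt7_general d d' hd2 V hV
end

section
/- Let M ∈ ℝ^{d×d} be nondegenerate. Then there exist d − 1 linearly independent vectors k̄_1,…,k̄_{d−1} ∈ ℤ^d \ {0} with ⟨k̄_j, M⁻¹e_d⟩ = 0 for all j = 1,…,d−1 if and only if the last column M⁻¹e_d of M⁻¹ is a nonzero real scalar multiple of an integer vector. -/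
/-!
The `d − 1` integer vectors span a hyperplane, so the real solution space of the integer system
they define is the line spanned by `M⁻¹e_d`; by Siegel's lemma the system also has a nonzero
integer solution, which therefore spans the same line. Conversely, if `M⁻¹e_d = t z` with `z`
integral and `z i ≠ 0`, the vectors `z i e_l − z l e_i` for `l ≠ i` do the job.
-/

open Matrix

namespace Int.Matrix

theorem exists_ne_zero_mulVec_eq_zero {α β : Type*} [Fintype α] [Fintype β] (A : Matrix α β ℤ)
    (h : Fintype.card α < Fintype.card β) : ∃ t : β → ℤ, t ≠ 0 ∧ A *ᵥ t = 0 := by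
  rcases (Fintype.card α).eq_zero_or_pos with h0 | h0
  · have : IsEmpty α := Fintype.card_eq_zero_iff.mp h0
    have : Nonempty β := Fintype.card_pos_iff.mp (by omega)
    exact ⟨1, one_ne_zero, Subsingleton.elim _ _⟩
  · obtain ⟨t, ht, hAt, -⟩ := exists_ne_zero_int_vec_norm_le A h h0
    exact ⟨t, ht, hAt⟩

end Int.Matrix

namespace Matrix

theorem finrank_ker_mulVecLin_add_card {m n F : Type*} [Fintype m] [Fintype n] [Field F]
    {A : Matrix m n F} (hA : LinearIndependent F A.row) :
    Module.finrank F (LinearMap.ker A.mulVecLin) + Fintype.card m = Fintype.card n := by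
  classical
  rw [← hA.rank_matrix, Matrix.rank, add_comm, LinearMap.finrank_range_add_finrank_ker,
    Module.finrank_fintype_fun_eq_card]

end Matrix

theorem exists_eq_smul_intCast_of_linearIndependent_rows {m ι F : Type*} [Fintype m] [Fintype ι]
    [Field F] [CharZero F] (K : Matrix m ι ℤ) (hcard : Fintype.card m + 1 = Fintype.card ι)
    (hK : LinearIndependent F (K.map (Int.cast : ℤ → F)).row) {v : ι → F}
    (hKv : K.map (Int.cast : ℤ → F) *ᵥ v = 0) (hv : v ≠ 0) :
    ∃ t : F, t ≠ 0 ∧ ∃ z : ι → ℤ, v = t • ((↑) ∘ z) := by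
  obtain ⟨z, hz0, hKz⟩ := Int.Matrix.exists_ne_zero_mulVec_eq_zero K (by omega)
  have hW : Module.finrank F (LinearMap.ker (K.map (Int.cast : ℤ → F)).mulVecLin) = 1 := by
    have := Matrix.finrank_ker_mulVecLin_add_card hK
    omega
  have hzW : ((↑) ∘ z : ι → F) ∈ LinearMap.ker (K.map (Int.cast : ℤ → F)).mulVecLin := by
    ext i
    simpa [hKz] using (RingHom.map_mulVec (Int.castRingHom F) K z i).symm
  have hzW0 : (⟨_, hzW⟩ : LinearMap.ker (K.map (Int.cast : ℤ → F)).mulVecLin) ≠ 0 := by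
    simpa [funext_iff] using hz0
  obtain ⟨t, ht⟩ := (finrank_eq_one_iff_of_nonzero' _ hzW0).mp hW ⟨v, hKv⟩
  refine ⟨t, ?_, z, ?_⟩
  · rintro rfl
    exact hv (by simpa [eq_comm, Subtype.ext_iff] using ht)
  · simpa [eq_comm] using congrArg Subtype.val ht

section pivot

variable {R : Type*} {n : ℕ}

def pivotVec [Ring R] (w : Fin (n + 1) → R) (i : Fin (n + 1)) (j : Fin n) : Fin (n + 1) → R :=
  Pi.single (i.succAbove j) (w i) - Pi.single i (w (i.succAbove j))

theorem pivotVec_dotProduct [CommRing R] (w : Fin (n + 1) → R) (i : Fin (n + 1)) (j : Fin n) :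
    pivotVec w i j ⬝ᵥ w = 0 := by
  simp [pivotVec, sub_dotProduct, single_dotProduct, mul_comm]

theorem pivotVec_apply_succAbove [Ring R] (w : Fin (n + 1) → R) (i : Fin (n + 1)) (j j' : Fin n) :
    pivotVec w i j (i.succAbove j') = if j' = j then w i else 0 := by
  simp [pivotVec, Pi.single_apply, Fin.succAbove_ne]

theorem linearIndependent_pivotVec [Ring R] [NoZeroDivisors R] {w : Fin (n + 1) → R}
    {i : Fin (n + 1)} (hi : w i ≠ 0) : LinearIndependent R (pivotVec w i) := by
  refine Fintype.linearIndependent_iff.mpr fun g hg j => ?_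
  have := congrFun hg (i.succAbove j)
  simp only [Finset.sum_apply, Pi.smul_apply, smul_eq_mul, pivotVec_apply_succAbove,
    mul_ite, mul_zero, Finset.sum_ite_eq, Finset.mem_univ, if_true, Pi.zero_apply] at this
  exact (mul_eq_zero.mp this).resolve_right hi

theorem map_comp_pivotVec [Ring R] {S : Type*} [Ring S] (f : R →+* S) (w : Fin (n + 1) → R)
    (i : Fin (n + 1)) (j : Fin n) : f ∘ pivotVec w i j = pivotVec (f ∘ w) i j := by
  ext l
  simp [pivotVec, Pi.single_apply, apply_ite f]

end pivot

theorem exists_linearIndependent_int_orthogonal_iff {F : Type*} [Field F] [CharZero F] {n : ℕ}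
    {v : Fin (n + 1) → F} (hv : v ≠ 0) :
    (∃ k : Fin n → (Fin (n + 1) → ℤ),
      (∀ j, k j ≠ 0) ∧
      LinearIndependent F (fun j : Fin n => fun l : Fin (n + 1) => ((k j l : F))) ∧
      ∀ j : Fin n, ∑ l : Fin (n + 1), (k j l : F) * v l = 0) ↔
    (∃ (t : F) (z : Fin (n + 1) → ℤ), t ≠ 0 ∧ ∀ l, v l = t * (z l : F)) := by
  constructor
  · rintro ⟨k, -, hk, hkv⟩
    obtain ⟨t, ht, z, rfl⟩ :=
      exists_eq_smul_intCast_of_linearIndependent_rows (Matrix.of k) (by simp) hk (funext hkv) hv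
    exact ⟨t, z, ht, fun l => rfl⟩
  · rintro ⟨t, z, ht, hvz⟩
    obtain ⟨i, hi⟩ : ∃ i, z i ≠ 0 := by
      by_contra! hz
      exact hv (funext fun l => by simp [hvz, hz])
    have hcast (j : Fin n) :
        (fun l => ((pivotVec z i j l : ℤ) : F)) = pivotVec (Int.cast ∘ z : Fin (n + 1) → F) i j :=
      map_comp_pivotVec (Int.castRingHom F) z i j
    have hli : LinearIndependent F (fun j l => ((pivotVec z i j l : ℤ) : F)) := by
      rw [funext hcast]
      exact linearIndependent_pivotVec (by simpa using hi)
    refine ⟨pivotVec z i, fun j h => hli.ne_zero j (by ext; simp [h]), hli, fun j => ?_⟩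
    have hz : ∑ l, ((pivotVec z i j l : ℤ) : F) * z l = 0 := by
      exact_mod_cast congrArg (Int.cast : ℤ → F) (pivotVec_dotProduct z i j)
    simp only [hvz, mul_left_comm _ t, ← Finset.mul_sum, hz, mul_zero]

/-- For a nondegenerate `M ∈ ℝ^{d×d}`, there exist `d − 1` linearly
independent nonzero integer vectors orthogonal to the last column `M⁻¹e_d` of `M⁻¹`
iff that column is a nonzero real scalar multiple of an integer vector. -/
theorem stmt16 (d : ℕ) (hd : 0 < d)
    (M : Matrix (Fin d) (Fin d) ℝ) (hM : M.det ≠ 0) :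
    (∃ k : Fin (d - 1) → (Fin d → ℤ),
      (∀ j, k j ≠ 0) ∧
      LinearIndependent ℝ (fun j : Fin (d - 1) => fun l : Fin d => ((k j l : ℝ))) ∧
      ∀ j : Fin (d - 1), ∑ l : Fin d, (k j l : ℝ) * M⁻¹ l ⟨d - 1, by omega⟩ = 0) ↔
    (∃ (t : ℝ) (z : Fin d → ℤ), t ≠ 0 ∧
      ∀ l : Fin d, M⁻¹ l ⟨d - 1, by omega⟩ = t * (z l : ℝ)) := by
  obtain ⟨n, rfl⟩ : ∃ n, d = n + 1 := ⟨d - 1, by omega⟩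
  have hinv : M⁻¹.det ≠ 0 := by simpa [Matrix.det_nonsing_inv] using hM
  exact exists_linearIndependent_int_orthogonal_iff
    ((linearIndependent_cols_of_det_ne_zero hinv).ne_zero _)
end
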